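/- arXiv:1610.06320 — 4 statements merged into one kernel-verified Lean document; each statement's English description precedes it below -/
import Mathlib

section
/- Let p > 1. There exist constants c, C > 0 depending only on p such that for all δ ≥ 0, all d ≥ 1 and all real d×d matrices P, Q: c·(δ+|P^sym|+|Q^sym|)^{p−2}·|P^sym−Q^sym|² ≤ (S(P)−S(Q)):(P−Q) ≤ C·(δ+|P^sym|+|Q^sym|)^{p−2}·|P^sym−Q^sym|². -/
open Matrix

/-- Symmetric part `P^sym = (P + Pᵀ)/2` of a square matrix. -/
noncomputable def msym {d : ℕ} (P : Matrix (Fin d) (Fin d) ℝ) : Matrix (Fin d) (Fin d) ℝ :=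
  (2⁻¹ : ℝ) • (P + Pᵀ)

/-- Frobenius inner product `A:B = ∑ᵢⱼ Aᵢⱼ Bᵢⱼ`. -/
noncomputable def mdot {d : ℕ} (A B : Matrix (Fin d) (Fin d) ℝ) : ℝ :=
  ∑ i, ∑ j, A i j * B i j

/-- Frobenius norm `|A| = (A:A)^(1/2)`. -/
noncomputable def mnorm {d : ℕ} (A : Matrix (Fin d) (Fin d) ℝ) : ℝ :=
  Real.sqrt (mdot A A)

/-- Stress tensor `S(P) = (δ + |P^sym|)^(p-2) • P^sym` (real power, `0^r = 0` for `r < 0`). -/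
noncomputable def Smap (p δ : ℝ) {d : ℕ} (P : Matrix (Fin d) (Fin d) ℝ) :
    Matrix (Fin d) (Fin d) ℝ :=
  ((δ + mnorm (msym P)) ^ (p - 2)) • msym P

/-- Associated function `F(P) = (δ + |P^sym|)^((p-2)/2) • P^sym`. -/
noncomputable def Fmap (p δ : ℝ) {d : ℕ} (P : Matrix (Fin d) (Fin d) ℝ) :
    Matrix (Fin d) (Fin d) ℝ :=
  ((δ + mnorm (msym P)) ^ ((p - 2) / 2)) • msym P

/-!
Write `A = P^sym`, `B = Q^sym`, `a = |A|`, `b = |B|`, `e = A:B` and `φ t = (δ + t)^(p-2)`.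
Since `S(P) - S(Q)` is symmetric,
`(S(P) - S(Q)):(P - Q) = φ a * a² + φ b * b² - (φ a + φ b) * e`, while `|A - B|² = a² + b² - 2e`.
Both are affine in `e`, which ranges over `[-ab, ab]` by Cauchy–Schwarz, so it suffices to take
`e = ±ab`, i.e. to compare `(φ a * a ∓ φ b * b)(a ∓ b)` with `φ a * (a ∓ b)²` for `b ≤ a`.
These one-variable estimates follow from Bernoulli's inequality, and `φ a` is within a factor
`2^|p-2|` of `(δ + a + b)^(p-2)`.
-/

open Real

namespace Real

lemma rpow_le_two_rpow_abs_mul_rpow {x y : ℝ} (r : ℝ) (hx : 0 ≤ x) (hxy : x ≤ 2 * y)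
    (hyx : y ≤ 2 * x) : x ^ r ≤ 2 ^ |r| * y ^ r := by
  rcases hx.eq_or_lt with rfl | hx
  · obtain rfl : y = 0 := by linarith
    nlinarith [one_le_rpow one_le_two (abs_nonneg r), rpow_nonneg le_rfl r]
  have hy : 0 < y := by linarith
  rcases le_total 0 r with hr | hr
  · calc x ^ r ≤ (2 * y) ^ r := rpow_le_rpow hx.le hxy hr
      _ = 2 ^ |r| * y ^ r := by rw [abs_of_nonneg hr, mul_rpow zero_le_two hy.le]
  · calc x ^ r ≤ (y / 2) ^ r := rpow_le_rpow_of_nonpos (by positivity) (by linarith) hr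
      _ = 2 ^ |r| * y ^ r := by
        rw [abs_of_nonpos hr, div_rpow hy.le zero_le_two, rpow_neg zero_le_two]
        ring

lemma rpow_sub_rpow_mul_le {x y s : ℝ} (hs : 0 ≤ s) (hy : 0 ≤ y) (hyx : y ≤ x) :
    (x ^ s - y ^ s) * y ≤ s * x ^ s * (x - y) := by
  rcases (hy.trans hyx).eq_or_lt with rfl | hx
  · obtain rfl : y = 0 := by linarith
    simp
  have bernoulli : 1 + (s + 1) * (y / x - 1) ≤ (y / x) ^ (s + 1) := by
    simpa using one_add_mul_self_le_rpow_one_add (s := y / x - 1)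
      (by linarith [div_nonneg hy hx.le]) (p := s + 1) (by linarith)
  have hxs : x ^ (s + 1) = x ^ s * x := rpow_add_one' hx.le (by linarith)
  have hys : y ^ (s + 1) = y ^ s * y := rpow_add_one' hy (by linarith)
  rw [div_rpow hy hx.le, le_div_iff₀ (by positivity), hxs, hys] at bernoulli
  have : x ^ s * x * (1 + (s + 1) * (y / x - 1)) = x ^ s * (x + (s + 1) * (y - x)) := by
    field_simp
  nlinarith

lemma rpow_mul_le_rpow_mul_sub {x y b r : ℝ} (hr : -1 ≤ r) (hr0 : r ≤ 0) (hb : 0 ≤ b)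
    (hby : b ≤ y) (hyx : y ≤ x) : y ^ r * b ≤ x ^ r * (b - r * (x - y)) := by
  rcases hb.eq_or_lt with rfl | hb
  · have := mul_nonneg (rpow_nonneg (hb.trans (hby.trans hyx)) r)
      (mul_nonneg_of_nonpos_of_nonpos hr0 (by linarith : y - x ≤ 0))
    linarith
  have hy : 0 < y := hb.trans_le hby
  have hx : 0 < x := hy.trans_le hyx
  have bernoulli : (x / y) ^ (-r) ≤ 1 + -r * (x / y - 1) := by
    simpa using rpow_one_add_le_one_add_mul_self (s := x / y - 1)
      (by linarith [div_nonneg hx.le hy.le]) (p := -r) (by linarith) (by linarith)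
  have hyr : y ^ r = x ^ r * (x / y) ^ (-r) := by
    rw [div_rpow hx.le hy.le, rpow_neg hx.le, rpow_neg hy.le]
    field_simp
  have hbxy : b * (x / y - 1) ≤ x - y := by
    rw [div_sub_one hy.ne', mul_div_assoc', div_le_iff₀ hy]
    nlinarith
  calc y ^ r * b = x ^ r * (b * (x / y) ^ (-r)) := by rw [hyr]; ring
    _ ≤ x ^ r * (b * (1 + -r * (x / y - 1))) := by gcongr
    _ ≤ x ^ r * (b - r * (x - y)) := by
      gcongr
      nlinarith

end Real

section StressScalar

variable {p δ a b : ℝ}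

lemma min_mul_rpow_mul_sub_le (hp : 1 < p) (hδ : 0 ≤ δ) (hb : 0 ≤ b) (hba : b ≤ a) :
    min 1 (p - 1) * ((δ + a) ^ (p - 2) * (a - b)) ≤
      (δ + a) ^ (p - 2) * a - (δ + b) ^ (p - 2) * b := by
  have hφa : 0 ≤ (δ + a) ^ (p - 2) * (a - b) :=
    mul_nonneg (rpow_nonneg (by linarith) _) (by linarith)
  rcases le_total 2 p with hp2 | hp2
  · have mono : (δ + b) ^ (p - 2) ≤ (δ + a) ^ (p - 2) :=
      rpow_le_rpow (by linarith) (by linarith) (by linarith)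
    nlinarith [min_le_left 1 (p - 1)]
  · have key := rpow_mul_le_rpow_mul_sub (x := δ + a) (y := δ + b) (r := p - 2)
      (by linarith) (by linarith) hb (by linarith) (by linarith)
    rw [min_eq_right (by linarith)]
    linarith

lemma rpow_mul_sub_le_max_mul (hδ : 0 ≤ δ) (hb : 0 ≤ b) (hba : b ≤ a) :
    (δ + a) ^ (p - 2) * a - (δ + b) ^ (p - 2) * b ≤
      max 1 (p - 1) * ((δ + a) ^ (p - 2) * (a - b)) := by
  have hφa : 0 ≤ (δ + a) ^ (p - 2) * (a - b) :=
    mul_nonneg (rpow_nonneg (by linarith) _) (by linarith)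
  rcases le_total 2 p with hp2 | hp2
  · have key := rpow_sub_rpow_mul_le (x := δ + a) (y := δ + b) (s := p - 2)
      (by linarith) (by linarith) (by linarith)
    have mono : (δ + b) ^ (p - 2) ≤ (δ + a) ^ (p - 2) :=
      rpow_le_rpow (by linarith) (by linarith) (by linarith)
    rw [max_eq_right (by linarith)]
    nlinarith [mul_le_mul_of_nonneg_left (by linarith : b ≤ δ + b) (sub_nonneg.2 mono)]
  · have anti : (δ + a) ^ (p - 2) * b ≤ (δ + b) ^ (p - 2) * b := by
      rcases hb.eq_or_lt with rfl | hb
      · simp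
      exact mul_le_mul_of_nonneg_right
        (rpow_le_rpow_of_nonpos (by linarith) (by linarith) (by linarith)) hb.le
    nlinarith [le_max_left 1 (p - 1)]

lemma stress_pairing_bounds_of_le (hp : 1 < p) (hδ : 0 ≤ δ) (hb : 0 ≤ b) (hba : b ≤ a)
    {e : ℝ} (he : |e| ≤ a * b) :
    min 1 (p - 1) / 2 * ((δ + a) ^ (p - 2) * (a ^ 2 + b ^ 2 - 2 * e)) ≤
        (δ + a) ^ (p - 2) * a ^ 2 + (δ + b) ^ (p - 2) * b ^ 2 -
          ((δ + a) ^ (p - 2) + (δ + b) ^ (p - 2)) * e ∧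
      (δ + a) ^ (p - 2) * a ^ 2 + (δ + b) ^ (p - 2) * b ^ 2 -
          ((δ + a) ^ (p - 2) + (δ + b) ^ (p - 2)) * e ≤
        2 * max 1 (p - 1) * ((δ + a) ^ (p - 2) * (a ^ 2 + b ^ 2 - 2 * e)) := by
  set φa := (δ + a) ^ (p - 2)
  set φb := (δ + b) ^ (p - 2)
  set m := min 1 (p - 1)
  set M := max 1 (p - 1)
  have hφa : 0 ≤ φa := rpow_nonneg (by linarith) _
  have hm : 0 ≤ m := le_min zero_le_one (by linarith)
  have hm1 : m ≤ 1 := min_le_left _ _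
  have hM1 : 1 ≤ M := le_max_left _ _
  have lower := min_mul_rpow_mul_sub_le hp hδ hb hba
  have upper := rpow_mul_sub_le_max_mul (p := p) hδ hb hba
  have hgb : 0 ≤ φb * b := mul_nonneg (rpow_nonneg (by linarith) _) hb
  have hgab : φb * b ≤ φa * a := by
    nlinarith [mul_nonneg hm (mul_nonneg hφa (sub_nonneg.2 hba))]
  -- both sides are affine in `e`: compare them at the endpoints `e = a * b` and `e = -(a * b)`
  have par_lo : m / 2 * (φa * (a - b) ^ 2) ≤ (φa * a - φb * b) * (a - b) := by
    nlinarith [mul_le_mul_of_nonneg_right lower (sub_nonneg.2 hba),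
      mul_nonneg hm (mul_nonneg hφa (sq_nonneg (a - b)))]
  have par_hi : (φa * a - φb * b) * (a - b) ≤ 2 * M * (φa * (a - b) ^ 2) := by
    nlinarith [mul_le_mul_of_nonneg_right upper (sub_nonneg.2 hba),
      mul_nonneg (by linarith : 0 ≤ M) (mul_nonneg hφa (sq_nonneg (a - b)))]
  have anti_lo : m / 2 * (φa * (a + b) ^ 2) ≤ (φa * a + φb * b) * (a + b) := by
    nlinarith [mul_nonneg hφa (mul_nonneg (sub_nonneg.2 hba) (by linarith : 0 ≤ a + b)),
      mul_nonneg (sub_nonneg.2 hm1) (mul_nonneg hφa (sq_nonneg (a + b))),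
      mul_nonneg hgb (by linarith : 0 ≤ a + b)]
  have anti_hi : (φa * a + φb * b) * (a + b) ≤ 2 * M * (φa * (a + b) ^ 2) := by
    nlinarith [mul_le_mul_of_nonneg_right hgab (by linarith : 0 ≤ a + b),
      mul_nonneg hφa (mul_nonneg hb (by linarith : 0 ≤ a + b)),
      mul_nonneg (sub_nonneg.2 hM1) (mul_nonneg hφa (sq_nonneg (a + b)))]
  obtain ⟨he₁, he₂⟩ := abs_le.mp he
  constructor
  · rcases le_total (m * φa) (φa + φb) with h | h
    · nlinarith [mul_nonneg (sub_nonneg.2 h) (sub_nonneg.2 he₂)]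
    · nlinarith [mul_nonneg (sub_nonneg.2 h) (neg_le_iff_add_nonneg.1 he₁)]
  · rcases le_total (4 * M * φa) (φa + φb) with h | h
    · nlinarith [mul_nonneg (sub_nonneg.2 h) (neg_le_iff_add_nonneg.1 he₁)]
    · nlinarith [mul_nonneg (sub_nonneg.2 h) (sub_nonneg.2 he₂)]

end StressScalar

theorem exists_stress_pairing_bounds {p : ℝ} (hp : 1 < p) :
    ∃ c : ℝ, 0 < c ∧ ∃ C : ℝ, 0 < C ∧ ∀ δ a b e : ℝ, 0 ≤ δ → 0 ≤ a → 0 ≤ b → |e| ≤ a * b →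
      c * ((δ + a + b) ^ (p - 2) * (a ^ 2 + b ^ 2 - 2 * e)) ≤
          (δ + a) ^ (p - 2) * a ^ 2 + (δ + b) ^ (p - 2) * b ^ 2 -
            ((δ + a) ^ (p - 2) + (δ + b) ^ (p - 2)) * e ∧
        (δ + a) ^ (p - 2) * a ^ 2 + (δ + b) ^ (p - 2) * b ^ 2 -
            ((δ + a) ^ (p - 2) + (δ + b) ^ (p - 2)) * e ≤
          C * ((δ + a + b) ^ (p - 2) * (a ^ 2 + b ^ 2 - 2 * e)) := by
  have hK : 0 < (2 : ℝ) ^ |p - 2| := by positivity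
  refine ⟨min 1 (p - 1) / 2 / 2 ^ |p - 2|, by positivity, 2 * max 1 (p - 1) * 2 ^ |p - 2|,
    by positivity, fun δ a b e hδ ha hb he => ?_⟩
  wlog hba : b ≤ a generalizing a b
  · obtain ⟨lo, hi⟩ := this b a hb ha (by rwa [mul_comm]) (le_of_not_ge hba)
    rw [add_right_comm] at lo hi
    constructor <;> linarith
  have hD : 0 ≤ a ^ 2 + b ^ 2 - 2 * e := by nlinarith [abs_le.mp he, sq_nonneg (a - b)]
  have hXa : (δ + a + b) ^ (p - 2) ≤ 2 ^ |p - 2| * (δ + a) ^ (p - 2) :=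
    rpow_le_two_rpow_abs_mul_rpow _ (by linarith) (by linarith) (by linarith)
  have haX : (δ + a) ^ (p - 2) ≤ 2 ^ |p - 2| * (δ + a + b) ^ (p - 2) :=
    rpow_le_two_rpow_abs_mul_rpow _ (by linarith) (by linarith) (by linarith)
  obtain ⟨lo, hi⟩ := stress_pairing_bounds_of_le hp hδ hb hba he
  set K := (2 : ℝ) ^ |p - 2|
  set X := (δ + a + b) ^ (p - 2)
  set D := a ^ 2 + b ^ 2 - 2 * e
  constructor
  · calc min 1 (p - 1) / 2 / K * (X * D) = min 1 (p - 1) / 2 * (X / K * D) := by ring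
      _ ≤ min 1 (p - 1) / 2 * ((δ + a) ^ (p - 2) * D) := by
          gcongr
          exact div_le_of_le_mul₀ hK.le (rpow_nonneg (by linarith) _) (by linarith)
      _ ≤ _ := lo
  · calc _ ≤ 2 * max 1 (p - 1) * ((δ + a) ^ (p - 2) * D) := hi
      _ ≤ 2 * max 1 (p - 1) * (K * X * D) := by gcongr
      _ = _ := by ring

noncomputable def frobVec {d : ℕ} (A : Matrix (Fin d) (Fin d) ℝ) :
    EuclideanSpace ℝ (Fin d × Fin d) :=
  WithLp.toLp 2 fun ij => A ij.1 ij.2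

section Frobenius

variable {d : ℕ}

lemma mdot_eq_inner (A B : Matrix (Fin d) (Fin d) ℝ) :
    mdot A B = inner ℝ (frobVec A) (frobVec B) := by
  simp only [mdot, frobVec, PiLp.inner_apply, Fintype.sum_prod_type]
  simp [mul_comm]

lemma mnorm_eq_norm (A : Matrix (Fin d) (Fin d) ℝ) : mnorm A = ‖frobVec A‖ := by
  rw [mnorm, mdot_eq_inner, norm_eq_sqrt_real_inner]

@[simp] lemma frobVec_sub (A B : Matrix (Fin d) (Fin d) ℝ) :
    frobVec (A - B) = frobVec A - frobVec B := rfl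

@[simp] lemma frobVec_add (A B : Matrix (Fin d) (Fin d) ℝ) :
    frobVec (A + B) = frobVec A + frobVec B := rfl

@[simp] lemma frobVec_smul (x : ℝ) (A : Matrix (Fin d) (Fin d) ℝ) :
    frobVec (x • A) = x • frobVec A := rfl

lemma abs_mdot_le (A B : Matrix (Fin d) (Fin d) ℝ) : |mdot A B| ≤ mnorm A * mnorm B := by
  rw [mdot_eq_inner, mnorm_eq_norm, mnorm_eq_norm]
  exact abs_real_inner_le_norm _ _

lemma mnorm_sub_sq (A B : Matrix (Fin d) (Fin d) ℝ) :
    mnorm (A - B) ^ 2 = mnorm A ^ 2 + mnorm B ^ 2 - 2 * mdot A B := by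
  rw [mdot_eq_inner, mnorm_eq_norm, mnorm_eq_norm, mnorm_eq_norm, frobVec_sub, norm_sub_sq_real]
  ring

lemma mdot_smul_sub_smul (x y : ℝ) (A B : Matrix (Fin d) (Fin d) ℝ) :
    mdot (x • A - y • B) (A - B) =
      x * mnorm A ^ 2 + y * mnorm B ^ 2 - (x + y) * mdot A B := by
  simp only [mdot_eq_inner, mnorm_eq_norm, frobVec_sub, frobVec_smul, inner_sub_left,
    inner_sub_right, real_inner_smul_left, real_inner_smul_right, real_inner_self_eq_norm_sq,
    real_inner_comm (frobVec A)]
  ring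

lemma mdot_transpose_right (M N : Matrix (Fin d) (Fin d) ℝ) : mdot M Nᵀ = mdot Mᵀ N := by
  simp only [mdot, transpose_apply]
  exact Finset.sum_comm

lemma Matrix.IsSymm.mdot_msym_right {M : Matrix (Fin d) (Fin d) ℝ} (hM : M.IsSymm)
    (N : Matrix (Fin d) (Fin d) ℝ) : mdot M (msym N) = mdot M N := by
  rw [msym, mdot_eq_inner, frobVec_smul, frobVec_add, real_inner_smul_right, inner_add_right,
    ← mdot_eq_inner, ← mdot_eq_inner, mdot_transpose_right, hM.eq]
  ring

lemma isSymm_msym (P : Matrix (Fin d) (Fin d) ℝ) : (msym P).IsSymm :=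
  (isSymm_add_transpose_self P).smul _

lemma msym_sub (P Q : Matrix (Fin d) (Fin d) ℝ) : msym (P - Q) = msym P - msym Q := by
  rw [msym, msym, msym, transpose_sub, ← smul_sub, add_sub_add_comm]

lemma mdot_Smap_sub_Smap (p δ : ℝ) (P Q : Matrix (Fin d) (Fin d) ℝ) :
    mdot (Smap p δ P - Smap p δ Q) (P - Q) =
      (δ + mnorm (msym P)) ^ (p - 2) * mnorm (msym P) ^ 2 +
        (δ + mnorm (msym Q)) ^ (p - 2) * mnorm (msym Q) ^ 2 -
        ((δ + mnorm (msym P)) ^ (p - 2) + (δ + mnorm (msym Q)) ^ (p - 2)) *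
          mdot (msym P) (msym Q) := by
  have hS : (Smap p δ P - Smap p δ Q).IsSymm :=
    ((isSymm_msym P).smul _).sub ((isSymm_msym Q).smul _)
  rw [← hS.mdot_msym_right, msym_sub, Smap, Smap, mdot_smul_sub_smul]

end Frobenius

/-- There are constants `c, C > 0` depending only on `p > 1` such that for all `δ ≥ 0`,
all `d ≥ 1` and all real `d×d` matrices `P, Q`:
`c * (δ + |P^sym| + |Q^sym|)^(p-2) * |P^sym - Q^sym|² ≤ (S(P) - S(Q)):(P - Q)
  ≤ C * (δ + |P^sym| + |Q^sym|)^(p-2) * |P^sym - Q^sym|²`. -/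
theorem stmt7 (p : ℝ) (hp : 1 < p) :
    ∃ c : ℝ, 0 < c ∧ ∃ C : ℝ, 0 < C ∧
      ∀ δ : ℝ, 0 ≤ δ → ∀ d : ℕ, 1 ≤ d → ∀ P Q : Matrix (Fin d) (Fin d) ℝ,
        c * ((δ + mnorm (msym P) + mnorm (msym Q)) ^ (p - 2)
              * mnorm (msym P - msym Q) ^ 2)
            ≤ mdot (Smap p δ P - Smap p δ Q) (P - Q) ∧
        mdot (Smap p δ P - Smap p δ Q) (P - Q)
            ≤ C * ((δ + mnorm (msym P) + mnorm (msym Q)) ^ (p - 2)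
                    * mnorm (msym P - msym Q) ^ 2) := by
  obtain ⟨c, hc, C, hC, bounds⟩ := exists_stress_pairing_bounds hp
  refine ⟨c, hc, C, hC, fun δ hδ d _ P Q => ?_⟩
  rw [mdot_Smap_sub_Smap, mnorm_sub_sq]
  exact bounds δ _ _ _ hδ (sqrt_nonneg _) (sqrt_nonneg _) (abs_mdot_le _ _)
end

section
/- Let p > 1. There exist constants c, C > 0 depending only on p such that for all δ ≥ 0, all d ≥ 1 and all real d×d matrices P, Q: c·φ_{|P^sym|}(|P^sym−Q^sym|) ≤ |F(P)−F(Q)|² ≤ C·φ_{|P^sym|}(|P^sym−Q^sym|), where φ_a(t) = ∫₀^t (δ+a+s)^{p−2}·s ds is the shifted function with shift a = |P^sym|. -/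
/-!
Put `x = Pˢʸᵐ`, `y = Qˢʸᵐ`, `a = |x|`, `b = |y|`, `q = (p - 2) / 2` and `f(t) = (δ + t)^q t`;
the Frobenius norm is the Euclidean norm of `ℝ^(d×d)`, so everything happens in an inner product
space. Here `u ≍ v` is `Comparable K u v` with `K` depending only on `p`.
With `W = 2 (a b - ⟪x, y⟫) ∈ [0, 4 a b]`,

  `|F(x) - F(y)|² = (f a - f b)² + (δ + a)^q (δ + b)^q W`,   `|x - y|² = (a - b)² + W`.

Assume `b ≤ a`. If `a ≤ 2 b`, all of `δ + a`, `δ + b`, `δ + ξ` (for `ξ ∈ [b, a]`) are comparable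
to `δ + a + b`, and the mean value theorem gives `f a - f b ≍ (δ + a + b)^q (a - b)`, so the two
identities match term by term. If `2 b ≤ a`, then `f b ≤ θ f a` with `θ < 1` (as `q > -1`),
so the left side is `≍ f(a)²` and `|x - y|² ≍ a²`. Either way
`|F(x) - F(y)|² ≍ (δ + a + b)^(p-2) |x - y|²`. Finally `δ + a + b ≍ δ + a + |x - y|`, and
`φ_a(t) ≍ (δ + a + t)^(p-2) t²` because on `(0, t]` the integrand lies between
`(δ + a + t)^(p-2) s` and `((δ + a + t) s / t)^(p-2) s`, whose integrals are `1/2` and `1/p` times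
`(δ + a + t)^(p-2) t²`.
-/

open Matrix

open Real intervalIntegral MeasureTheory

lemma rpow_le_rpow_abs_mul_rpow {u v M : ℝ} (hu : 0 < u) (hv : 0 < v) (hM : 1 ≤ M)
    (h : v ≤ M * u) (h' : u ≤ M * v) (r : ℝ) : v ^ r ≤ M ^ |r| * u ^ r := by
  have hM0 : 0 < M := one_pos.trans_le hM
  rcases le_or_gt 0 r with hr | hr
  · rw [abs_of_nonneg hr, ← mul_rpow hM0.le hu.le]
    exact rpow_le_rpow hv.le h hr
  · have hv' : u / M ≤ v := by rwa [div_le_iff₀ hM0, mul_comm]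
    calc v ^ r ≤ (u / M) ^ r := rpow_le_rpow_of_nonpos (by positivity) hv' hr.le
      _ = M ^ |r| * u ^ r := by
        rw [abs_of_neg hr, div_rpow hu.le hM0.le, rpow_neg hM0.le]; ring

structure Comparable (K u v : ℝ) : Prop where
  nonneg_left : 0 ≤ u
  nonneg_right : 0 ≤ v
  le : u ≤ K * v
  ge : v ≤ K * u

namespace Comparable

variable {K L u v w u' v' : ℝ}

lemma symm (h : Comparable K u v) : Comparable K v u :=
  ⟨h.nonneg_right, h.nonneg_left, h.ge, h.le⟩

lemma refl (hu : 0 ≤ u) (hK : 1 ≤ K) : Comparable K u u :=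
  ⟨hu, hu, le_mul_of_one_le_left hu hK, le_mul_of_one_le_left hu hK⟩

lemma of_le_of_le {c C : ℝ} (hc : 0 < c) (hv : 0 ≤ v) (hcu : c * v ≤ u) (huC : u ≤ C * v) :
    Comparable (max C c⁻¹) u v := by
  have hu : 0 ≤ u := (mul_nonneg hc.le hv).trans hcu
  refine ⟨hu, hv, huC.trans (by gcongr; exact le_max_left _ _), ?_⟩
  calc v ≤ c⁻¹ * u := by rwa [le_inv_mul_iff₀ hc]
    _ ≤ max C c⁻¹ * u := by gcongr; exact le_max_right _ _

lemma mono (h : Comparable K u v) (hKL : K ≤ L) : Comparable L u v :=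
  ⟨h.nonneg_left, h.nonneg_right, h.le.trans (by gcongr; exact h.nonneg_right),
    h.ge.trans (by gcongr; exact h.nonneg_left)⟩

lemma trans (h₁ : Comparable K u v) (h₂ : Comparable L v w) (hK : 0 ≤ K) (hL : 0 ≤ L) :
    Comparable (K * L) u w :=
  ⟨h₁.nonneg_left, h₂.nonneg_right,
    h₁.le.trans (by rw [mul_assoc]; exact mul_le_mul_of_nonneg_left h₂.le hK),
    h₂.ge.trans (by rw [mul_comm K, mul_assoc]; exact mul_le_mul_of_nonneg_left h₁.ge hL)⟩

lemma add (h₁ : Comparable K u v) (h₂ : Comparable K u' v') :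
    Comparable K (u + u') (v + v') :=
  ⟨add_nonneg h₁.nonneg_left h₂.nonneg_left, add_nonneg h₁.nonneg_right h₂.nonneg_right,
    by linarith [h₁.le, h₂.le], by linarith [h₁.ge, h₂.ge]⟩

lemma mul (h₁ : Comparable K u v) (h₂ : Comparable L u' v') :
    Comparable (K * L) (u * u') (v * v') := by
  refine ⟨mul_nonneg h₁.nonneg_left h₂.nonneg_left,
    mul_nonneg h₁.nonneg_right h₂.nonneg_right, ?_, ?_⟩
  · calc u * u' ≤ (K * v) * (L * v') :=
          mul_le_mul h₁.le h₂.le h₂.nonneg_left (h₁.nonneg_left.trans h₁.le)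
      _ = K * L * (v * v') := by ring
  · calc v * v' ≤ (K * u) * (L * u') :=
          mul_le_mul h₁.ge h₂.ge h₂.nonneg_right (h₁.nonneg_right.trans h₁.ge)
      _ = K * L * (u * u') := by ring

lemma const_mul (h : Comparable K u v) {c : ℝ} (hc : 0 ≤ c) : Comparable K (c * u) (c * v) :=
  ⟨mul_nonneg hc h.nonneg_left, mul_nonneg hc h.nonneg_right,
    by nlinarith [mul_le_mul_of_nonneg_left h.le hc],
    by nlinarith [mul_le_mul_of_nonneg_left h.ge hc]⟩

lemma mul_const (h : Comparable K u v) {c : ℝ} (hc : 0 ≤ c) : Comparable K (u * c) (v * c) := by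
  simpa only [mul_comm _ c] using h.const_mul hc

lemma sq (h : Comparable K u v) : Comparable (K ^ 2) (u ^ 2) (v ^ 2) := by
  simpa only [pow_two] using h.mul h

lemma rpow (h : Comparable K u v) (hK : 1 ≤ K) (r : ℝ) :
    Comparable (K ^ |r|) (u ^ r) (v ^ r) := by
  rcases h.nonneg_left.eq_or_lt with hu | hu
  · have hv : v = 0 := le_antisymm (by simpa [← hu] using h.ge) h.nonneg_right
    subst hv
    rw [← hu]
    exact refl (rpow_nonneg le_rfl r) (one_le_rpow hK (abs_nonneg r))
  have hv : 0 < v := h.nonneg_right.lt_of_ne fun hv => by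
    have := h.le; rw [← hv, mul_zero] at this; linarith
  exact ⟨rpow_nonneg hu.le r, rpow_nonneg hv.le r,
    rpow_le_rpow_abs_mul_rpow hv hu hK h.le h.ge r, rpow_le_rpow_abs_mul_rpow hu hv hK h.ge h.le r⟩

end Comparable

lemma integral_le_integral_le_of_forall_mem_Ioc {f g h : ℝ → ℝ} {a b : ℝ} (hab : a ≤ b)
    (hf : Measurable f) (hg : IntervalIntegrable g volume a b)
    (hh : IntervalIntegrable h volume a b) (hg0 : ∀ x ∈ Set.Ioc a b, 0 ≤ g x)
    (hgfh : ∀ x ∈ Set.Ioc a b, g x ≤ f x ∧ f x ≤ h x) :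
    ∫ x in a..b, g x ≤ ∫ x in a..b, f x ∧ ∫ x in a..b, f x ≤ ∫ x in a..b, h x := by
  have hf_int : IntervalIntegrable f volume a b := by
    refine hh.mono_fun' hf.aestronglyMeasurable ?_
    rw [Set.uIoc_of_le hab]
    refine (ae_restrict_mem measurableSet_Ioc).mono fun x hx => ?_
    have := hgfh x hx
    show ‖f x‖ ≤ h x
    rw [Real.norm_of_nonneg ((hg0 x hx).trans this.1)]
    exact this.2
  exact ⟨integral_mono_on_of_le_Ioo hab hg hf_int fun x hx =>
      (hgfh x (Set.Ioo_subset_Ioc_self hx)).1,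
    integral_mono_on_of_le_Ioo hab hf_int hh fun x hx => (hgfh x (Set.Ioo_subset_Ioc_self hx)).2⟩

lemma add_div_mul_le_add {κ s t : ℝ} (hκ : 0 ≤ κ) (hst : s ≤ t) (ht : 0 < t) :
    (κ + t) / t * s ≤ κ + s := by
  rw [div_mul_eq_mul_div, div_le_iff₀ ht]
  nlinarith

lemma integral_div_rpow_mul_rpow_sub_one {p κ t : ℝ} (hp : 0 < p) (hκ : 0 ≤ κ) (ht : 0 < t) :
    ∫ s in (0:ℝ)..t, ((κ + t) / t) ^ (p - 2) * s ^ (p - 1) =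
      1 / p * ((κ + t) ^ (p - 2) * t ^ 2) := by
  have htp : t ^ p = t ^ (p - 2) * t ^ 2 := by rw [← rpow_natCast, ← rpow_add ht]; norm_num
  rw [intervalIntegral.integral_const_mul, integral_rpow (Or.inl (by linarith)), sub_add_cancel,
    zero_rpow hp.ne', sub_zero, div_rpow (by positivity) ht.le, htp]
  field_simp

theorem integral_shifted_rpow_mul_bounds {p κ t : ℝ} (hp : 0 < p) (hκ : 0 ≤ κ) (ht : 0 ≤ t) :
    min (1 / 2) (1 / p) * ((κ + t) ^ (p - 2) * t ^ 2) ≤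
        ∫ s in (0:ℝ)..t, (κ + s) ^ (p - 2) * s ∧
      ∫ s in (0:ℝ)..t, (κ + s) ^ (p - 2) * s ≤
        max (1 / 2) (1 / p) * ((κ + t) ^ (p - 2) * t ^ 2) := by
  obtain rfl | ht := ht.eq_or_lt
  · simp
  set c := (κ + t) / t
  set g₁ : ℝ → ℝ := fun s => (κ + t) ^ (p - 2) * s
  set g₂ : ℝ → ℝ := fun s => c ^ (p - 2) * s ^ (p - 1)
  have hg₁ : ∫ s in (0:ℝ)..t, g₁ s = 1 / 2 * ((κ + t) ^ (p - 2) * t ^ 2) := by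
    rw [intervalIntegral.integral_const_mul, integral_id]; ring
  have hg₁_int : IntervalIntegrable g₁ volume 0 t :=
    (continuous_const.mul continuous_id).intervalIntegrable _ _
  have hg₂_int : IntervalIntegrable g₂ volume 0 t :=
    (intervalIntegrable_rpow' (by linarith)).const_mul _
  have hf : Measurable fun s : ℝ => (κ + s) ^ (p - 2) * s := by fun_prop
  have hg₁0 : ∀ s ∈ Set.Ioc 0 t, 0 ≤ g₁ s := fun s hs => mul_nonneg (by positivity) hs.1.le
  have hg₂0 : ∀ s ∈ Set.Ioc 0 t, 0 ≤ g₂ s := fun s hs =>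
    mul_nonneg (by positivity) (rpow_nonneg hs.1.le _)
  -- `g₂ s = (c s)^(p-2) s`, and on `(0, t]` the base `κ + s` lies between `c s` and `κ + t`
  have hg₂_eq : ∀ s ∈ Set.Ioc 0 t, g₂ s = (c * s) ^ (p - 2) * s := by
    intro s ⟨hs, _⟩
    show c ^ (p - 2) * s ^ (p - 1) = _
    rw [mul_rpow (by positivity) hs.le, show p - 1 = p - 2 + 1 by ring, rpow_add_one hs.ne']
    ring
  rcases le_total 2 p with hp2 | hp2
  · obtain ⟨hlow, hup⟩ :=
      integral_le_integral_le_of_forall_mem_Ioc ht.le hf hg₂_int hg₁_int hg₂0 fun s ⟨hs, hst⟩ => by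
        rw [hg₂_eq s ⟨hs, hst⟩]
        exact ⟨mul_le_mul_of_nonneg_right (rpow_le_rpow (by positivity)
          (add_div_mul_le_add hκ hst ht) (by linarith)) hs.le,
          mul_le_mul_of_nonneg_right (rpow_le_rpow (by linarith) (by linarith) (by linarith))
            hs.le⟩
    rw [integral_div_rpow_mul_rpow_sub_one hp hκ ht] at hlow; rw [hg₁] at hup
    exact ⟨le_trans (by gcongr; exact min_le_right _ _) hlow,
      hup.trans (by gcongr; exact le_max_left _ _)⟩
  · obtain ⟨hlow, hup⟩ :=
      integral_le_integral_le_of_forall_mem_Ioc ht.le hf hg₁_int hg₂_int hg₁0 fun s ⟨hs, hst⟩ => by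
        rw [hg₂_eq s ⟨hs, hst⟩]
        exact ⟨mul_le_mul_of_nonneg_right (rpow_le_rpow_of_nonpos (by linarith) (by linarith)
          (by linarith)) hs.le,
          mul_le_mul_of_nonneg_right (rpow_le_rpow_of_nonpos (by positivity)
            (add_div_mul_le_add hκ hst ht) (by linarith)) hs.le⟩
    rw [hg₁] at hlow; rw [integral_div_rpow_mul_rpow_sub_one hp hκ ht] at hup
    exact ⟨le_trans (by gcongr; exact min_le_left _ _) hlow,
      hup.trans (by gcongr; exact le_max_right _ _)⟩

lemma one_le_max_inv {r : ℝ} (hr : 0 < r) : 1 ≤ max r r⁻¹ := by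
  rcases le_total 1 r with h | h
  · exact le_max_of_le_left h
  · exact le_max_of_le_right (one_le_inv₀ hr |>.mpr h)

lemma comparable_add_mul {r δ ξ : ℝ} (hr : 0 < r) (hδ : 0 ≤ δ) (hξ : 0 ≤ ξ) :
    Comparable (max r r⁻¹) (δ + r * ξ) (δ + ξ) := by
  have h1 := one_le_max_inv hr
  have h2 : r ≤ max r r⁻¹ := le_max_left _ _
  have h3 : 1 ≤ max r r⁻¹ * r := by
    calc (1 : ℝ) = r⁻¹ * r := (inv_mul_cancel₀ hr.ne').symm
      _ ≤ _ := by gcongr; exact le_max_right _ _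
  refine ⟨by positivity, by positivity, ?_, ?_⟩ <;>
    nlinarith [mul_le_mul_of_nonneg_right h2 hξ, mul_le_mul_of_nonneg_right h1 hδ,
      mul_le_mul_of_nonneg_right h3 hξ]

lemma exists_shifted_rpow_mul_sub_eq {q δ a b : ℝ} (hδ : 0 ≤ δ) (hb : 0 < b) (hba : b < a) :
    ∃ ξ ∈ Set.Ioo b a, (δ + a) ^ q * a - (δ + b) ^ q * b =
      (δ + ξ) ^ (q - 1) * (δ + (1 + q) * ξ) * (a - b) := by
  have hderiv : ∀ t ∈ Set.Icc b a, HasDerivAt (fun t => (δ + t) ^ q * t)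
      ((δ + t) ^ (q - 1) * (δ + (1 + q) * t)) t := by
    intro t ht
    have hδt : 0 < δ + t := by linarith [ht.1]
    have h := (((hasDerivAt_id' t).const_add δ).rpow_const (p := q) (Or.inl hδt.ne')).mul
      (hasDerivAt_id' t)
    refine h.congr_deriv ?_
    rw [show (δ + t) ^ q = (δ + t) ^ (q - 1) * (δ + t) by
      rw [← rpow_add_one hδt.ne', sub_add_cancel]]
    ring
  obtain ⟨ξ, hξ, hslope⟩ := exists_hasDerivAt_eq_slope _ _ hba
    (fun t ht => (hderiv t ht).continuousAt.continuousWithinAt)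
    (fun t ht => hderiv t (Set.Ioo_subset_Icc_self ht))
  exact ⟨ξ, hξ, by rw [hslope, div_mul_cancel₀ _ (sub_ne_zero.mpr hba.ne')]⟩

lemma shifted_rpow_mul_le_of_two_mul_le {q δ a b : ℝ} (hq : -1 < q) (hδ : 0 ≤ δ)
    (hb : 0 ≤ b) (hba : 2 * b ≤ a) :
    (δ + b) ^ q * b ≤ max (1 / 2) (2 ^ (-(q + 1))) * ((δ + a) ^ q * a) := by
  have hfa : 0 ≤ (δ + a) ^ q * a := mul_nonneg (rpow_nonneg (by linarith) _) (by linarith)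
  rcases le_total 0 q with hq0 | hq0
  · calc (δ + b) ^ q * b ≤ (δ + a) ^ q * (a / 2) :=
          mul_le_mul (rpow_le_rpow (by linarith) (by linarith) hq0) (by linarith) hb
            (rpow_nonneg (by linarith) _)
      _ = 1 / 2 * ((δ + a) ^ q * a) := by ring
      _ ≤ _ := by gcongr; exact le_max_left _ _
  obtain rfl | hb := hb.eq_or_lt
  · have hθ : (0 : ℝ) ≤ max (1 / 2) (2 ^ (-(q + 1))) := le_max_of_le_left (by norm_num)
    simpa using mul_nonneg hθ hfa
  -- with `l = a / b ≥ 2`: `δ + a ≤ l (δ + b)` and `q ≤ 0` give `(δ + a)^q ≥ l^q (δ + b)^q`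
  set l := a / b with hl
  have hl2 : 2 ≤ l := by rw [hl, le_div_iff₀ hb]; linarith
  have hbase : δ + a ≤ l * (δ + b) := by
    rw [mul_add, hl, div_mul_cancel₀ _ hb.ne']; nlinarith
  calc (δ + b) ^ q * b = 2 ^ (-(q + 1)) * (2 ^ (q + 1) * ((δ + b) ^ q * b)) := by
        rw [← mul_assoc, ← rpow_add two_pos, neg_add_cancel, rpow_zero, one_mul]
    _ ≤ 2 ^ (-(q + 1)) * (l ^ (q + 1) * ((δ + b) ^ q * b)) := by
        gcongr; linarith
    _ = 2 ^ (-(q + 1)) * ((l * (δ + b)) ^ q * a) := by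
        rw [mul_rpow (by linarith) (by linarith), rpow_add_one (by linarith), hl]
        field_simp
    _ ≤ 2 ^ (-(q + 1)) * ((δ + a) ^ q * a) := by
        gcongr ?_ * (?_ * a)
        · linarith
        · exact rpow_le_rpow_of_nonpos (by linarith) hbase hq0
    _ ≤ _ := by gcongr; exact le_max_right _ _

section ShiftedPower

variable {q δ a b W : ℝ}

lemma comparable_shifted_rpow_mul_sub_sq (hq : -1 < q) (hδ : 0 ≤ δ) (hba : b ≤ a)
    (hab : a ≤ 2 * b) :
    Comparable ((max (1 + q) (1 + q)⁻¹ * 3 ^ |q|) ^ 2)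
      (((δ + a) ^ q * a - (δ + b) ^ q * b) ^ 2) (((δ + a + b) ^ q) ^ 2 * (a - b) ^ 2) := by
  obtain rfl | hba := hba.eq_or_lt
  · refine ⟨?_, ?_, ?_, ?_⟩ <;> simp
  have hb : 0 < b := by linarith
  obtain ⟨ξ, hξ, heq⟩ := exists_shifted_rpow_mul_sub_eq (q := q) hδ hb hba
  have hδξ : 0 < δ + ξ := by linarith [hξ.1]
  have hξ3 : Comparable 3 (δ + ξ) (δ + a + b) :=
    ⟨hδξ.le, by linarith, by linarith [hξ.2], by linarith [hξ.1]⟩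
  have hderiv : Comparable (max (1 + q) (1 + q)⁻¹) ((δ + ξ) ^ (q - 1) * (δ + (1 + q) * ξ))
      ((δ + ξ) ^ q) := by
    rw [show (δ + ξ) ^ q = (δ + ξ) ^ (q - 1) * (δ + ξ) by
      rw [← rpow_add_one hδξ.ne', sub_add_cancel]]
    exact (comparable_add_mul (by linarith) hδ (by linarith [hξ.1])).const_mul
      (rpow_nonneg hδξ.le _)
  have hL := one_le_max_inv (show 0 < 1 + q by linarith)
  rw [heq, mul_pow _ (a - b)]
  exact ((hderiv.trans (hξ3.rpow (by norm_num) q) (by linarith) (by positivity)).sq).mul_const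
    (sq_nonneg (a - b))

lemma comparable_shifted_rpow_mul_shifted_rpow (hδ : 0 ≤ δ) (hb : 0 ≤ b) (hba : b ≤ a)
    (hab : a ≤ 2 * b) :
    Comparable ((3 ^ |q|) ^ 2) ((δ + a) ^ q * (δ + b) ^ q) (((δ + a + b) ^ q) ^ 2) := by
  have ha3 : Comparable 3 (δ + a) (δ + a + b) :=
    ⟨by linarith, by linarith, by linarith, by linarith⟩
  have hb3 : Comparable 3 (δ + b) (δ + a + b) :=
    ⟨by linarith, by linarith, by linarith, by linarith⟩
  simpa only [pow_two] using (ha3.rpow (by norm_num) q).mul (hb3.rpow (by norm_num) q)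

lemma comparable_shifted_rpow_of_le_two_mul (hq : -1 < q) (hδ : 0 ≤ δ) (hb : 0 ≤ b)
    (hba : b ≤ a) (hab : a ≤ 2 * b) (hW : 0 ≤ W) :
    Comparable ((max (1 + q) (1 + q)⁻¹ * 3 ^ |q|) ^ 2)
      (((δ + a) ^ q * a - (δ + b) ^ q * b) ^ 2 + (δ + a) ^ q * (δ + b) ^ q * W)
      (((δ + a + b) ^ q) ^ 2 * ((a - b) ^ 2 + W)) := by
  have hcross := (comparable_shifted_rpow_mul_shifted_rpow (q := q) hδ hb hba hab).mul_const hW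
  rw [mul_add]
  refine (comparable_shifted_rpow_mul_sub_sq hq hδ hba hab).add (hcross.mono ?_)
  have := one_le_max_inv (show 0 < 1 + q by linarith)
  gcongr
  exact le_mul_of_one_le_left (by positivity) this

lemma comparable_shifted_rpow_of_two_mul_le (hq : -1 < q) (hδ : 0 ≤ δ) (hb : 0 ≤ b)
    (hba : 2 * b ≤ a) (hW : 0 ≤ W) (hWab : W ≤ 4 * a * b) :
    Comparable (max 5 ((1 - max (1 / 2) (2 ^ (-(q + 1)))) ^ 2)⁻¹ * ((2 ^ |q|) ^ 2 * 4))
      (((δ + a) ^ q * a - (δ + b) ^ q * b) ^ 2 + (δ + a) ^ q * (δ + b) ^ q * W)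
      (((δ + a + b) ^ q) ^ 2 * ((a - b) ^ 2 + W)) := by
  set θ := max (1 / 2) ((2 : ℝ) ^ (-(q + 1)))
  have hθ : θ < 1 :=
    max_lt (by norm_num) (rpow_lt_one_of_one_lt_of_neg (by norm_num) (by linarith))
  have ha : 0 ≤ a := by linarith
  set α := (δ + a) ^ q
  set β := (δ + b) ^ q
  have hα : 0 ≤ α := rpow_nonneg (by linarith) _
  have hβ : 0 ≤ β := rpow_nonneg (by linarith) _
  have hsmall : β * b ≤ θ * (α * a) := shifted_rpow_mul_le_of_two_mul_le hq hδ hb hba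
  have hfb : 0 ≤ β * b := mul_nonneg hβ hb
  have hfa : 0 ≤ α * a := mul_nonneg hα ha
  have hD : Comparable (max 5 ((1 - θ) ^ 2)⁻¹) ((α * a - β * b) ^ 2 + α * β * W)
      ((α * a) ^ 2) := by
    refine Comparable.of_le_of_le (by nlinarith) (sq_nonneg _) ?_ ?_
    · have h1 : (1 - θ) * (α * a) ≤ α * a - β * b := by linarith
      have h2 : ((1 - θ) * (α * a)) ^ 2 ≤ (α * a - β * b) ^ 2 :=
        pow_le_pow_left₀ (by nlinarith) h1 2
      nlinarith [mul_nonneg (mul_nonneg hα hβ) hW]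
    · have h1 : (α * a - β * b) ^ 2 ≤ (α * a) ^ 2 :=
        pow_le_pow_left₀ (by nlinarith) (by linarith) 2
      have h2 : α * β * W ≤ 4 * (α * a) * (β * b) := by
        nlinarith [mul_le_mul_of_nonneg_left hWab (mul_nonneg hα hβ)]
      nlinarith
  have hN : Comparable 4 (a ^ 2) ((a - b) ^ 2 + W) :=
    ⟨sq_nonneg _, by positivity, by nlinarith, by nlinarith⟩
  have hα2 : Comparable 2 (δ + a) (δ + a + b) :=
    ⟨by linarith, by linarith, by linarith, by linarith⟩
  rw [mul_pow] at hD
  exact hD.trans ((hα2.rpow (by norm_num) q).sq.mul hN) (by positivity) (by positivity)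

end ShiftedPower

-- `W` stands for `2 (‖x‖ ‖y‖ - ⟪x, y⟫)`, cf. `norm_smul_sub_smul_sq`.
theorem exists_comparable_shifted_rpow {q : ℝ} (hq : -1 < q) :
    ∃ K, 0 < K ∧ ∀ δ a b W : ℝ, 0 ≤ δ → 0 ≤ a → 0 ≤ b → 0 ≤ W → W ≤ 4 * a * b →
      Comparable K (((δ + a) ^ q * a - (δ + b) ^ q * b) ^ 2 + (δ + a) ^ q * (δ + b) ^ q * W)
        (((δ + a + b) ^ q) ^ 2 * ((a - b) ^ 2 + W)) := by
  set Knear := (max (1 + q) (1 + q)⁻¹ * 3 ^ |q|) ^ 2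
  set Kfar : ℝ := max 5 ((1 - max (1 / 2) (2 ^ (-(q + 1)))) ^ 2)⁻¹ * ((2 ^ |q|) ^ 2 * 4)
  have hKnear : 0 < Knear :=
    pow_pos (mul_pos (lt_max_of_lt_left (by linarith)) (by positivity)) 2
  refine ⟨max Knear Kfar, lt_max_of_lt_left hKnear, fun δ a b W hδ ha hb hW hWab => ?_⟩
  wlog hba : b ≤ a generalizing a b
  · have h := this b a hb ha (by linarith) (le_of_not_ge hba)
    rwa [add_right_comm δ b a, sub_sq_comm b a, sub_sq_comm ((δ + b) ^ q * b),
      mul_comm ((δ + b) ^ q) ((δ + a) ^ q)] at h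
  rcases le_total (2 * b) a with hfar | hnear
  · exact (comparable_shifted_rpow_of_two_mul_le hq hδ hb hfar hW hWab).mono (le_max_right _ _)
  · exact (comparable_shifted_rpow_of_le_two_mul hq hδ hb hba hnear hW).mono (le_max_left _ _)

section InnerProductSpace

variable {E : Type*} [NormedAddCommGroup E] [InnerProductSpace ℝ E]

lemma norm_smul_sub_smul_sq {α β : ℝ} (hα : 0 ≤ α) (hβ : 0 ≤ β) (x y : E) :
    ‖α • x - β • y‖ ^ 2 =
      (α * ‖x‖ - β * ‖y‖) ^ 2 + α * β * (2 * (‖x‖ * ‖y‖ - inner ℝ x y)) := by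
  rw [norm_sub_sq_real, norm_smul, norm_smul, real_inner_smul_left, real_inner_smul_right,
    Real.norm_of_nonneg hα, Real.norm_of_nonneg hβ]
  ring

end InnerProductSpace

theorem exists_comparable_norm_sub_sq_integral {p : ℝ} (hp : 0 < p) :
    ∃ K, 0 < K ∧ ∀ (E : Type*) [NormedAddCommGroup E] [InnerProductSpace ℝ E] (δ : ℝ),
      0 ≤ δ → ∀ x y : E,
        Comparable K (‖(δ + ‖x‖) ^ ((p - 2) / 2) • x - (δ + ‖y‖) ^ ((p - 2) / 2) • y‖ ^ 2)
          (∫ s in (0:ℝ)..‖x - y‖, (δ + ‖x‖ + s) ^ (p - 2) * s) := by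
  set q := (p - 2) / 2 with hq
  obtain ⟨K₀, hK₀, hcore⟩ := exists_comparable_shifted_rpow (q := q) (by linarith)
  set Kφ := max (max (1 / 2) (1 / p)) (min (1 / 2) (1 / p))⁻¹
  have hKφ : 0 < Kφ := lt_max_of_lt_left (lt_max_of_lt_left (by norm_num))
  refine ⟨K₀ * ((2 ^ |q|) ^ 2 * Kφ), by positivity, fun E _ _ δ hδ x y => ?_⟩
  have hinner := abs_real_inner_le_norm x y
  have hW : 0 ≤ 2 * (‖x‖ * ‖y‖ - inner ℝ x y) := by linarith [le_abs_self (inner ℝ x y)]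
  have hWab : 2 * (‖x‖ * ‖y‖ - inner ℝ x y) ≤ 4 * ‖x‖ * ‖y‖ := by
    linarith [neg_abs_le (inner ℝ x y)]
  have hN : ‖x - y‖ ^ 2 = (‖x‖ - ‖y‖) ^ 2 + 2 * (‖x‖ * ‖y‖ - inner ℝ x y) := by
    rw [norm_sub_sq_real]; ring
  have hD := hcore δ ‖x‖ ‖y‖ _ hδ (norm_nonneg x) (norm_nonneg y) hW hWab
  rw [← hN, ← norm_smul_sub_smul_sq (by positivity) (by positivity)] at hD
  have hshift : Comparable 2 (δ + ‖x‖ + ‖y‖) (δ + ‖x‖ + ‖x - y‖) := by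
    have h₁ := norm_sub_le x y
    have h₂ := norm_sub_norm_le y x
    rw [norm_sub_rev] at h₂
    exact ⟨by positivity, by positivity, by linarith [norm_nonneg (x - y)],
      by linarith [norm_nonneg y]⟩
  have hφ : Comparable Kφ (((δ + ‖x‖ + ‖x - y‖) ^ q) ^ 2 * ‖x - y‖ ^ 2)
      (∫ s in (0:ℝ)..‖x - y‖, (δ + ‖x‖ + s) ^ (p - 2) * s) := by
    rw [← rpow_mul_natCast (by positivity), Nat.cast_two, div_mul_cancel₀ _ two_ne_zero]
    obtain ⟨hlow, hup⟩ :=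
      integral_shifted_rpow_mul_bounds hp (by positivity : 0 ≤ δ + ‖x‖) (norm_nonneg (x - y))
    exact (Comparable.of_le_of_le (lt_min (by norm_num) (by positivity)) (by positivity)
      hlow hup).symm
  exact hD.trans (((hshift.rpow (by norm_num) q).sq.mul_const (sq_nonneg _)).trans hφ
    (by positivity) hKφ.le) hK₀.le (by positivity)

noncomputable def frobeniusToEuclidean (d : ℕ) :
    Matrix (Fin d) (Fin d) ℝ →ₗ[ℝ] EuclideanSpace ℝ (Fin d × Fin d) where
  toFun A := WithLp.toLp 2 fun z => A z.1 z.2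
  map_add' _ _ := rfl
  map_smul' _ _ := rfl

lemma mnorm_eq_norm_frobeniusToEuclidean {d : ℕ} (A : Matrix (Fin d) (Fin d) ℝ) :
    mnorm A = ‖frobeniusToEuclidean d A‖ := by
  rw [mnorm, mdot, EuclideanSpace.norm_eq, ← Fintype.sum_prod_type']
  simp only [Real.norm_eq_abs, sq_abs, ← pow_two]
  rfl

/-- There are constants `c, C > 0` depending only on `p > 1` such that for all `δ ≥ 0`,
all `d ≥ 1` and all real `d×d` matrices `P, Q`:
`c * φ_{|P^sym|}(|P^sym - Q^sym|) ≤ |F(P) - F(Q)|² ≤ C * φ_{|P^sym|}(|P^sym - Q^sym|)`,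
where `φ_a(t) = ∫₀ᵗ (δ+a+s)^(p-2) * s ds` is the shifted function with `a = |P^sym|`. -/
theorem stmt8 (p : ℝ) (hp : 1 < p) :
    ∃ c : ℝ, 0 < c ∧ ∃ C : ℝ, 0 < C ∧
      ∀ δ : ℝ, 0 ≤ δ → ∀ d : ℕ, 1 ≤ d → ∀ P Q : Matrix (Fin d) (Fin d) ℝ,
        c * (∫ s in (0:ℝ)..(mnorm (msym P - msym Q)),
              (δ + mnorm (msym P) + s) ^ (p - 2) * s)
            ≤ mnorm (Fmap p δ P - Fmap p δ Q) ^ 2 ∧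
        mnorm (Fmap p δ P - Fmap p δ Q) ^ 2
            ≤ C * ∫ s in (0:ℝ)..(mnorm (msym P - msym Q)),
                (δ + mnorm (msym P) + s) ^ (p - 2) * s := by
  obtain ⟨K, hK, hcomp⟩ := exists_comparable_norm_sub_sq_integral (by linarith : 0 < p)
  refine ⟨K⁻¹, inv_pos.mpr hK, K, hK, fun δ hδ d _ P Q => ?_⟩
  have h := hcomp _ δ hδ (frobeniusToEuclidean d (msym P)) (frobeniusToEuclidean d (msym Q))
  simp only [← map_smul, ← map_sub, ← mnorm_eq_norm_frobeniusToEuclidean] at h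
  exact ⟨(inv_mul_le_iff₀ hK).mpr h.ge, h.le⟩
end

section
/- There exists a constant c > 0 depending only on p such that for all δ ≥ 0, all d ≥ 1 and all real d×d matrices P, Q: if 1 < p ≤ 2 then |F(P)−F(Q)|² ≤ c·|P^sym−Q^sym|^p, and if p ≥ 2 then |P^sym−Q^sym|^p ≤ c·|F(P)−F(Q)|². -/
open Matrix

/-!
Only the inner-product structure of the Frobenius norm matters, so we argue in a real inner
product space with `A = P^sym`, `B = Q^sym`.
Write `a = δ + ‖A‖`, `b = δ + ‖B‖`, `r = (p - 2)/2` and, by symmetry, `‖B‖ ≤ ‖A‖`.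

For `p ≤ 2` split `F(A) - F(B) = a^r (A - B) + (a^r - b^r) B`. Since `‖A - B‖ ≤ 2a` and `r ≤ 0`,
the first term is at most `2 ‖A - B‖^(r+1)`; the second is at most `b^(r+1) - a^r b`, which is
bounded by `(a - b)^(r+1) ≤ ‖A - B‖^(r+1)`.

For `p ≥ 2` expand `⟪F(A) - F(B), A - B⟫ ≥ (a^r + b^r)/2 · ‖A - B‖² ≥ (‖A - B‖/2)^r ‖A - B‖²/2`
and conclude with Cauchy–Schwarz.
-/

namespace Real

theorem rpow_mul_le_two_mul_rpow_add_one {r a n : ℝ} (hr : -1 ≤ r) (hr0 : r ≤ 0) (hn : 0 ≤ n)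
    (hna : n ≤ 2 * a) : a ^ r * n ≤ 2 * n ^ (r + 1) := by
  rcases hn.eq_or_lt with rfl | hn
  · rw [mul_zero]
    exact mul_nonneg zero_le_two (rpow_nonneg le_rfl _)
  calc a ^ r * n ≤ (n / 2) ^ r * n :=
        mul_le_mul_of_nonneg_right (rpow_le_rpow_of_nonpos (half_pos hn) (by linarith) hr0) hn.le
    _ = 2 * (n / 2) ^ (r + 1) := by
        rw [rpow_add_one (half_pos hn).ne']
        ring
    _ ≤ 2 * n ^ (r + 1) := by gcongr <;> linarith

theorem rpow_add_one_sub_rpow_mul_le {r a b : ℝ} (hr : -1 ≤ r) (hr0 : r ≤ 0) (hb : 0 ≤ b)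
    (hba : b ≤ a) (ha : 0 < a) : b ^ (r + 1) - a ^ r * b ≤ (a - b) ^ (r + 1) := by
  have hcancel : ∀ x : ℝ, 0 ≤ x → x ^ (-r) * x ^ (r + 1) = x := fun x hx => by
    rw [← rpow_add' hx (by ring_nf; norm_num)]
    ring_nf
    exact rpow_one x
  refine le_of_mul_le_mul_left ?_ (rpow_pos_of_pos ha (-r))
  calc a ^ (-r) * (b ^ (r + 1) - a ^ r * b) = a ^ (-r) * b ^ (r + 1) - b := by
        rw [mul_sub, ← mul_assoc, ← rpow_add ha, neg_add_cancel, rpow_zero, one_mul]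
    _ ≤ a ^ (-r) * a ^ (r + 1) - b := by
        gcongr
        linarith
    _ = (a - b) ^ (-r) * (a - b) ^ (r + 1) := by
        rw [hcancel a ha.le, hcancel (a - b) (by linarith)]
    _ ≤ a ^ (-r) * (a - b) ^ (r + 1) := by gcongr <;> linarith

end Real

section InnerProductSpace

open scoped RealInnerProductSpace

variable {E : Type*} [NormedAddCommGroup E] [InnerProductSpace ℝ E]

noncomputable def Fvec (p δ : ℝ) (A : E) : E := (δ + ‖A‖) ^ ((p - 2) / 2) • A

theorem inner_smul_sub_smul_sub (α β : ℝ) (A B : E) :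
    ⟪α • A - β • B, A - B⟫ =
      (α + β) / 2 * ‖A - B‖ ^ 2 + (α - β) * (‖A‖ ^ 2 - ‖B‖ ^ 2) / 2 := by
  rw [norm_sub_sq_real, inner_sub_left, inner_sub_right, inner_sub_right, real_inner_smul_left,
    real_inner_smul_left, real_inner_smul_left, real_inner_smul_left, real_inner_comm B A,
    real_inner_self_eq_norm_sq, real_inner_self_eq_norm_sq]
  ring

variable {p δ : ℝ}

theorem norm_Fvec_sub_le (hp0 : 0 ≤ p) (hp2 : p ≤ 2) (hδ : 0 ≤ δ) (A B : E) :
    ‖Fvec p δ A - Fvec p δ B‖ ≤ 3 * ‖A - B‖ ^ (p / 2) := by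
  wlog hBA : ‖B‖ ≤ ‖A‖ generalizing A B
  · rw [norm_sub_rev (Fvec p δ A), norm_sub_rev A]
    exact this B A (le_of_not_ge hBA)
  set r := (p - 2) / 2 with hr
  have hr1 : -1 ≤ r := by linarith
  have hr0 : r ≤ 0 := by linarith
  rw [show p / 2 = r + 1 by ring]
  set a := δ + ‖A‖
  set b := δ + ‖B‖
  have hba : b ≤ a := by linarith
  have hfirst : ‖a ^ r • (A - B)‖ ≤ 2 * ‖A - B‖ ^ (r + 1) := by
    rw [norm_smul, Real.norm_of_nonneg (by positivity)]
    refine Real.rpow_mul_le_two_mul_rpow_add_one hr1 hr0 (norm_nonneg _) ?_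
    linarith [norm_sub_le A B, norm_nonneg A]
  have hsecond : ‖(a ^ r - b ^ r) • B‖ ≤ ‖A - B‖ ^ (r + 1) := by
    rcases eq_or_ne B 0 with rfl | hB
    · rw [smul_zero, norm_zero]
      positivity
    have hb : 0 < b := by positivity
    have hab : 0 ≤ b ^ r - a ^ r := sub_nonneg.2 (Real.rpow_le_rpow_of_nonpos hb hba hr0)
    calc ‖(a ^ r - b ^ r) • B‖ = (b ^ r - a ^ r) * ‖B‖ := by
          rw [norm_smul, Real.norm_eq_abs, abs_sub_comm, abs_of_nonneg hab]
      _ ≤ (b ^ r - a ^ r) * b := by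
          gcongr
          linarith
      _ = b ^ (r + 1) - a ^ r * b := by
          rw [Real.rpow_add_one hb.ne']
          ring
      _ ≤ (a - b) ^ (r + 1) :=
          Real.rpow_add_one_sub_rpow_mul_le hr1 hr0 hb.le hba (hb.trans_le hba)
      _ ≤ ‖A - B‖ ^ (r + 1) := by gcongr <;> linarith [norm_sub_norm_le A B]
  calc ‖Fvec p δ A - Fvec p δ B‖ = ‖a ^ r • (A - B) + (a ^ r - b ^ r) • B‖ := by
        congr 1
        simp only [Fvec]
        module
    _ ≤ 2 * ‖A - B‖ ^ (r + 1) + ‖A - B‖ ^ (r + 1) :=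
        (norm_add_le _ _).trans (add_le_add hfirst hsecond)
    _ = 3 * ‖A - B‖ ^ (r + 1) := by ring

theorem half_norm_sub_rpow_le_norm_Fvec_sub (hp : 2 ≤ p) (hδ : 0 ≤ δ) (A B : E) :
    (‖A - B‖ / 2) ^ (p / 2) ≤ ‖Fvec p δ A - Fvec p δ B‖ := by
  wlog hBA : ‖B‖ ≤ ‖A‖ generalizing A B
  · rw [norm_sub_rev (Fvec p δ A), norm_sub_rev A]
    exact this B A (le_of_not_ge hBA)
  set s := (p - 2) / 2 with hs
  have hs0 : 0 ≤ s := by linarith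
  rcases (norm_nonneg (A - B)).eq_or_lt with hn0 | hn0
  · rw [← hn0, zero_div, Real.zero_rpow (by positivity)]
    positivity
  set n := ‖A - B‖
  set a := δ + ‖A‖
  set b := δ + ‖B‖
  have hmonotone : 0 ≤ (a ^ s - b ^ s) * (‖A‖ ^ 2 - ‖B‖ ^ 2) / 2 := by
    have hab : b ^ s ≤ a ^ s := Real.rpow_le_rpow (by positivity) (by linarith) hs0
    have hAB : ‖B‖ ^ 2 ≤ ‖A‖ ^ 2 := pow_le_pow_left₀ (norm_nonneg _) hBA 2
    apply div_nonneg (mul_nonneg _ _) zero_le_two <;> linarith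
  have hinner : (n / 2) ^ s * (n / 2) * n ≤ ⟪Fvec p δ A - Fvec p δ B, A - B⟫ := by
    rw [Fvec, Fvec, ← hs, inner_smul_sub_smul_sub]
    have hna : (n / 2) ^ s ≤ a ^ s :=
      Real.rpow_le_rpow (by positivity) (by linarith [norm_sub_le A B, norm_nonneg B]) hs0
    have hb : 0 ≤ b ^ s := by positivity
    have hsum : (n / 2) ^ s * (n / 2) * n ≤ (a ^ s + b ^ s) / 2 * n ^ 2 := by
      rw [show (n / 2) ^ s * (n / 2) * n = (n / 2) ^ s / 2 * n ^ 2 by ring]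
      gcongr
      linarith
    linarith
  have hcs := real_inner_le_norm (Fvec p δ A - Fvec p δ B) (A - B)
  calc (n / 2) ^ (p / 2) = (n / 2) ^ s * (n / 2) := by
        rw [show p / 2 = s + 1 by ring, Real.rpow_add_one (by positivity)]
    _ ≤ ‖Fvec p δ A - Fvec p δ B‖ := le_of_mul_le_mul_right (hinner.trans hcs) hn0

end InnerProductSpace

noncomputable def toFrobeniusVec {d : ℕ} (A : Matrix (Fin d) (Fin d) ℝ) :
    EuclideanSpace ℝ (Fin d × Fin d) :=
  WithLp.toLp 2 fun ij => A ij.1 ij.2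

theorem toFrobeniusVec_sub {d : ℕ} (A B : Matrix (Fin d) (Fin d) ℝ) :
    toFrobeniusVec (A - B) = toFrobeniusVec A - toFrobeniusVec B := rfl

theorem toFrobeniusVec_smul {d : ℕ} (c : ℝ) (A : Matrix (Fin d) (Fin d) ℝ) :
    toFrobeniusVec (c • A) = c • toFrobeniusVec A := rfl

theorem mnorm_eq_norm_toFrobeniusVec {d : ℕ} (A : Matrix (Fin d) (Fin d) ℝ) :
    mnorm A = ‖toFrobeniusVec A‖ := by
  rw [mnorm, mdot, EuclideanSpace.norm_eq, Fintype.sum_prod_type]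
  simp only [toFrobeniusVec, Real.norm_eq_abs, sq, abs_mul_abs_self]

theorem toFrobeniusVec_Fmap (p δ : ℝ) {d : ℕ} (P : Matrix (Fin d) (Fin d) ℝ) :
    toFrobeniusVec (Fmap p δ P) = Fvec p δ (toFrobeniusVec (msym P)) := by
  rw [Fmap, Fvec, toFrobeniusVec_smul, mnorm_eq_norm_toFrobeniusVec]

/-- There is a constant `c > 0` depending only on `p > 1` such that for all `δ ≥ 0`,
`d ≥ 1` and all real `d×d` matrices `P, Q`: if `p ≤ 2` then
`|F(P)-F(Q)|² ≤ c * |P^sym - Q^sym|^p`, and if `p ≥ 2` then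
`|P^sym - Q^sym|^p ≤ c * |F(P)-F(Q)|²`. -/
theorem stmt11 (p : ℝ) (hp : 1 < p) :
    ∃ c : ℝ, 0 < c ∧
      ∀ δ : ℝ, 0 ≤ δ → ∀ d : ℕ, 1 ≤ d → ∀ P Q : Matrix (Fin d) (Fin d) ℝ,
        (p ≤ 2 →
          mnorm (Fmap p δ P - Fmap p δ Q) ^ 2 ≤ c * mnorm (msym P - msym Q) ^ p) ∧
        (2 ≤ p →
          mnorm (msym P - msym Q) ^ p ≤ c * mnorm (Fmap p δ P - Fmap p δ Q) ^ 2) := by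
  refine ⟨2 ^ p + 9, by positivity, fun δ hδ d _ P Q => ?_⟩
  simp only [mnorm_eq_norm_toFrobeniusVec, toFrobeniusVec_sub, toFrobeniusVec_Fmap]
  set A := toFrobeniusVec (msym P)
  set B := toFrobeniusVec (msym Q)
  have hsq : ∀ x : ℝ, 0 ≤ x → (x ^ (p / 2)) ^ 2 = x ^ p := fun x hx => by
    rw [← Real.rpow_mul_natCast hx]
    ring_nf
  constructor
  · intro hp2
    calc ‖Fvec p δ A - Fvec p δ B‖ ^ 2 ≤ (3 * ‖A - B‖ ^ (p / 2)) ^ 2 := by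
          gcongr
          exact norm_Fvec_sub_le (by linarith) hp2 hδ A B
      _ = 9 * ‖A - B‖ ^ p := by rw [mul_pow, hsq _ (norm_nonneg _)]; norm_num
      _ ≤ (2 ^ p + 9) * ‖A - B‖ ^ p := by gcongr; linarith [Real.rpow_pos_of_pos two_pos p]
  · intro hp2
    calc ‖A - B‖ ^ p = 2 ^ p * ((‖A - B‖ / 2) ^ (p / 2)) ^ 2 := by
          rw [hsq _ (by positivity), Real.div_rpow (norm_nonneg _) zero_le_two]
          field_simp
      _ ≤ 2 ^ p * ‖Fvec p δ A - Fvec p δ B‖ ^ 2 := by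
          gcongr
          exact half_norm_sub_rpow_le_norm_Fvec_sub hp2 hδ A B
      _ ≤ (2 ^ p + 9) * ‖Fvec p δ A - Fvec p δ B‖ ^ 2 := by gcongr; linarith
end

section
/- Let p ∈ (1,2) and δ ∈ [0,1]. There exists a constant c > 0 depending only on p such that for every measurable symmetric-matrix-valued function G on Ω with ‖G‖_p < ∞: ‖G‖_p² ≤ c·K^{2−p}·‖F∘G‖₂² + c·‖F∘G‖₂^{4/p}, where K = δ·|Ω|^{1/p}. -/
/-!
On `Ω` the symmetry of `G` gives `|F(G)|² = (δ + |G|)^(p-2) |G|²`. Where `|G| ≥ δ` this dominates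
`2^(p-2) |G|^p`; where `|G| < δ` it dominates `(2δ)^(p-2) |G|²`, and Hölder's inequality on that set
turns the resulting `L²` bound into an `Lᵖ` bound at the cost of a factor `|Ω|^((2-p)/2)`. Adding
the two pieces and raising to the power `2/p` gives the claim with `c = 8`.
-/

open Matrix

open MeasureTheory Set

lemma mnorm_nonneg {d : ℕ} (A : Matrix (Fin d) (Fin d) ℝ) : 0 ≤ mnorm A :=
  Real.sqrt_nonneg _

lemma mnorm_smul {d : ℕ} (c : ℝ) (A : Matrix (Fin d) (Fin d) ℝ) :
    mnorm (c • A) = |c| * mnorm A := by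
  have hdot : mdot (c • A) (c • A) = c ^ 2 * mdot A A := by
    simp only [mdot, Finset.mul_sum, Matrix.smul_apply, smul_eq_mul]
    exact Finset.sum_congr rfl fun i _ => Finset.sum_congr rfl fun j _ => by ring
  rw [mnorm, hdot, Real.sqrt_mul (sq_nonneg c), Real.sqrt_sq_eq_abs, mnorm]

lemma msym_of_transpose_eq {d : ℕ} {P : Matrix (Fin d) (Fin d) ℝ} (hP : Pᵀ = P) :
    msym P = P := by
  rw [msym, hP, ← two_smul ℝ P, smul_smul, inv_mul_cancel₀ two_ne_zero, one_smul]

lemma measurable_mnorm {X : Type*} [MeasurableSpace X] {d : ℕ}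
    {G : X → Matrix (Fin d) (Fin d) ℝ} (hG : ∀ i j, Measurable fun x => G x i j) :
    Measurable fun x => mnorm (G x) :=
  Real.continuous_sqrt.measurable.comp <| Finset.measurable_sum _ fun i _ =>
    Finset.measurable_sum _ fun j _ => (hG i j).mul (hG i j)

noncomputable def fnormSq (p δ t : ℝ) : ℝ :=
  (δ + t) ^ (p - 2) * t ^ (2:ℝ)

lemma mnorm_Fmap_rpow_two {p δ : ℝ} (hδ : 0 ≤ δ) {d : ℕ} (P : Matrix (Fin d) (Fin d) ℝ) :
    mnorm (Fmap p δ P) ^ (2:ℝ) = fnormSq p δ (mnorm (msym P)) := by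
  have hbase : 0 ≤ δ + mnorm (msym P) := add_nonneg hδ (mnorm_nonneg _)
  rw [Fmap, mnorm_smul, abs_of_nonneg (Real.rpow_nonneg hbase _),
    Real.mul_rpow (Real.rpow_nonneg hbase _) (mnorm_nonneg _), ← Real.rpow_mul hbase,
    div_mul_cancel₀ _ two_ne_zero, fnormSq]

section Pointwise

variable {p δ t : ℝ}

lemma fnormSq_nonneg (hδ : 0 ≤ δ) (ht : 0 ≤ t) : 0 ≤ fnormSq p δ t :=
  mul_nonneg (Real.rpow_nonneg (add_nonneg hδ ht) _) (Real.rpow_nonneg ht _)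

lemma fnormSq_le_rpow (hp2 : p ≤ 2) (hδ : 0 ≤ δ) (ht : 0 ≤ t) : fnormSq p δ t ≤ t ^ p := by
  rcases ht.eq_or_lt with rfl | ht
  · simp [fnormSq, Real.rpow_nonneg]
  calc fnormSq p δ t ≤ t ^ (p - 2) * t ^ (2:ℝ) :=
        mul_le_mul_of_nonneg_right
          (Real.rpow_le_rpow_of_nonpos ht (by linarith) (by linarith)) (by positivity)
    _ = t ^ p := by rw [← Real.rpow_add ht, sub_add_cancel]

lemma rpow_le_fnormSq_of_le (hp0 : 0 < p) (hp2 : p ≤ 2) (hδ : 0 ≤ δ) (hδt : δ ≤ t) :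
    t ^ p ≤ 2 ^ (2 - p) * fnormSq p δ t := by
  rcases (hδ.trans hδt).eq_or_lt with rfl | ht
  · rw [Real.zero_rpow hp0.ne']
    exact mul_nonneg (by positivity) (fnormSq_nonneg hδ le_rfl)
  have hmono : (2 * t) ^ (p - 2) ≤ (δ + t) ^ (p - 2) :=
    Real.rpow_le_rpow_of_nonpos (by linarith) (by linarith) (by linarith)
  calc t ^ p = 2 ^ (2 - p) * ((2 * t) ^ (p - 2) * t ^ (2:ℝ)) := by
        rw [Real.mul_rpow zero_le_two ht.le, mul_assoc, ← Real.rpow_add ht, sub_add_cancel,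
          ← mul_assoc, ← Real.rpow_add two_pos, sub_add_sub_cancel', sub_self, Real.rpow_zero,
          one_mul]
    _ ≤ 2 ^ (2 - p) * fnormSq p δ t := by
        unfold fnormSq
        gcongr

lemma rpow_two_le_fnormSq_of_lt (hp2 : p ≤ 2) (ht : 0 ≤ t) (htδ : t < δ) :
    t ^ (2:ℝ) ≤ (2 * δ) ^ (2 - p) * fnormSq p δ t := by
  have hδ : 0 < 2 * δ := by linarith
  have hmono : (2 * δ) ^ (p - 2) ≤ (δ + t) ^ (p - 2) :=
    Real.rpow_le_rpow_of_nonpos (by linarith) (by linarith) (by linarith)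
  calc t ^ (2:ℝ) = (2 * δ) ^ (2 - p) * ((2 * δ) ^ (p - 2) * t ^ (2:ℝ)) := by
        rw [← mul_assoc, ← Real.rpow_add hδ, sub_add_sub_cancel', sub_self, Real.rpow_zero,
          one_mul]
    _ ≤ (2 * δ) ^ (2 - p) * fnormSq p δ t := by
        unfold fnormSq
        gcongr

end Pointwise

section Integral

variable {X : Type*} [MeasurableSpace X] {μ : Measure X} {Ω : Set X} {g : X → ℝ} {p δ : ℝ}

/-- Hölder's inequality with exponents `q / p` and `q / (q - p)` against the constant `1`. -/
lemma setIntegral_rpow_le_mul_measure_rpow {q : ℝ} (hp : 0 < p) (hpq : p < q) (hΩfin : μ Ω < ⊤)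
    (hgm : Measurable g) (hg0 : ∀ x, 0 ≤ g x) (hgq : IntegrableOn (fun x => g x ^ q) Ω μ) :
    ∫ x in Ω, g x ^ p ∂μ ≤ (∫ x in Ω, g x ^ q ∂μ) ^ (p / q) * (μ Ω).toReal ^ ((q - p) / q) := by
  have : IsFiniteMeasure (μ.restrict Ω) := isFiniteMeasure_restrict.mpr hΩfin.ne
  have hq : 0 < q := hp.trans hpq
  have hconj : (q / p).HolderConjugate (q / (q - p)) := by
    rw [Real.holderConjugate_iff, one_lt_div hp, inv_div, inv_div, ← add_div,
      add_sub_cancel, div_self hq.ne']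
    exact ⟨hpq, rfl⟩
  have hpow : ∀ x, (g x ^ p) ^ (q / p) = g x ^ q := fun x => by
    rw [← Real.rpow_mul (hg0 x), mul_div_cancel₀ _ hp.ne']
  have hmem : MemLp (fun x => g x ^ p) (ENNReal.ofReal (q / p)) (μ.restrict Ω) := by
    refine (integrable_norm_rpow_iff (hgm.pow_const p).aestronglyMeasurable
      (by simpa using div_pos hq hp) ENNReal.ofReal_ne_top).mp ?_
    simpa only [Real.norm_of_nonneg (Real.rpow_nonneg (hg0 _) _),
      ENNReal.toReal_ofReal (div_pos hq hp).le, hpow] using hgq.integrable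
  have := integral_mul_le_Lp_mul_Lq_of_nonneg hconj
    (Filter.Eventually.of_forall fun x => Real.rpow_nonneg (hg0 x) p)
    (Filter.Eventually.of_forall fun _ => zero_le_one) hmem (memLp_const 1)
  simpa only [mul_one, Real.one_rpow, hpow, integral_const, smul_eq_mul,
    Measure.restrict_apply_univ, one_div_div, measureReal_def] using this

lemma integrableOn_fnormSq (hp2 : p ≤ 2) (hδ : 0 ≤ δ) (hgm : Measurable g) (hg0 : ∀ x, 0 ≤ g x)
    (hgp : IntegrableOn (fun x => g x ^ p) Ω μ) :
    IntegrableOn (fun x => fnormSq p δ (g x)) Ω μ := by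
  refine hgp.mono' ((((hgm.const_add δ).pow_const _).mul
    (hgm.pow_const _)).aestronglyMeasurable) (Filter.Eventually.of_forall fun x => ?_)
  rw [Real.norm_of_nonneg (fnormSq_nonneg hδ (hg0 x))]
  exact fnormSq_le_rpow hp2 hδ (hg0 x)

variable (hp0 : 0 < p) (hp2 : p < 2) (hδ : 0 ≤ δ) (hΩ : MeasurableSet Ω)
  (hgm : Measurable g) (hg0 : ∀ x, 0 ≤ g x) (hgp : IntegrableOn (fun x => g x ^ p) Ω μ)
include hp0 hp2 hδ hΩ hgm hg0 hgp

lemma setIntegral_inter_rpow_le :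
    ∫ x in Ω ∩ {x | δ ≤ g x}, g x ^ p ∂μ ≤ 2 ^ (2 - p) * ∫ x in Ω, fnormSq p δ (g x) ∂μ := by
  have hF := integrableOn_fnormSq hp2.le hδ hgm hg0 hgp
  calc ∫ x in Ω ∩ {x | δ ≤ g x}, g x ^ p ∂μ
      ≤ ∫ x in Ω ∩ {x | δ ≤ g x}, 2 ^ (2 - p) * fnormSq p δ (g x) ∂μ :=
        setIntegral_mono_on (hgp.mono_set inter_subset_left)
          ((hF.mono_set inter_subset_left).const_mul _)
          (hΩ.inter (measurableSet_le measurable_const hgm))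
          fun x hx => rpow_le_fnormSq_of_le hp0 hp2.le hδ hx.2
    _ ≤ 2 ^ (2 - p) * ∫ x in Ω, fnormSq p δ (g x) ∂μ := by
        rw [integral_const_mul]
        exact mul_le_mul_of_nonneg_left (setIntegral_mono_set hF
          (Filter.Eventually.of_forall fun x => fnormSq_nonneg hδ (hg0 x))
          inter_subset_left.eventuallyLE) (by positivity)

lemma setIntegral_sdiff_rpow_le (hΩfin : μ Ω < ⊤) :
    ∫ x in Ω \ {x | δ ≤ g x}, g x ^ p ∂μ ≤
      ((2 * δ) ^ (2 - p) * ∫ x in Ω, fnormSq p δ (g x) ∂μ) ^ (p / 2)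
        * (μ Ω).toReal ^ ((2 - p) / 2) := by
  set S := Ω \ {x | δ ≤ g x}
  have hS : MeasurableSet S := hΩ.diff (measurableSet_le measurable_const hgm)
  have hF := integrableOn_fnormSq hp2.le hδ hgm hg0 hgp
  have hpointwise : ∀ x ∈ S, g x ^ (2:ℝ) ≤ (2 * δ) ^ (2 - p) * fnormSq p δ (g x) :=
    fun x hx => rpow_two_le_fnormSq_of_lt hp2.le (hg0 x) (not_le.mp hx.2)
  have hFS : IntegrableOn (fun x => (2 * δ) ^ (2 - p) * fnormSq p δ (g x)) S μ :=
    (hF.mono_set sdiff_subset).const_mul _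
  have hg2 : IntegrableOn (fun x => g x ^ (2:ℝ)) S μ := by
    refine hFS.mono' (hgm.pow_const _).aestronglyMeasurable ?_
    filter_upwards [ae_restrict_mem hS] with x hx
    rw [Real.norm_of_nonneg (Real.rpow_nonneg (hg0 x) _)]
    exact hpointwise x hx
  have hL2 : ∫ x in S, g x ^ (2:ℝ) ∂μ ≤ (2 * δ) ^ (2 - p) * ∫ x in Ω, fnormSq p δ (g x) ∂μ :=
    calc ∫ x in S, g x ^ (2:ℝ) ∂μ ≤ ∫ x in S, (2 * δ) ^ (2 - p) * fnormSq p δ (g x) ∂μ :=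
          setIntegral_mono_on hg2 hFS hS hpointwise
      _ ≤ (2 * δ) ^ (2 - p) * ∫ x in Ω, fnormSq p δ (g x) ∂μ := by
          rw [integral_const_mul]
          exact mul_le_mul_of_nonneg_left (setIntegral_mono_set hF
            (Filter.Eventually.of_forall fun x => fnormSq_nonneg hδ (hg0 x))
            sdiff_subset.eventuallyLE) (by positivity)
  calc ∫ x in S, g x ^ p ∂μ
      ≤ (∫ x in S, g x ^ (2:ℝ) ∂μ) ^ (p / 2) * (μ S).toReal ^ ((2 - p) / 2) :=
        setIntegral_rpow_le_mul_measure_rpow hp0 hp2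
          ((measure_mono sdiff_subset).trans_lt hΩfin) hgm hg0 hg2
    _ ≤ _ := by
        have h0 : 0 ≤ ∫ x in S, g x ^ (2:ℝ) ∂μ :=
          setIntegral_nonneg hS fun x _ => Real.rpow_nonneg (hg0 x) _
        gcongr
        · exact Real.rpow_nonneg (h0.trans hL2) _
        · exact hΩfin.ne
        · exact sdiff_subset

lemma setIntegral_rpow_le (hΩfin : μ Ω < ⊤) :
    ∫ x in Ω, g x ^ p ∂μ ≤ 2 ^ (2 - p) * ∫ x in Ω, fnormSq p δ (g x) ∂μ
      + ((2 * δ) ^ (2 - p) * ∫ x in Ω, fnormSq p δ (g x) ∂μ) ^ (p / 2)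
        * (μ Ω).toReal ^ ((2 - p) / 2) := by
  rw [← integral_inter_add_sdiff (measurableSet_le measurable_const hgm) hgp]
  exact add_le_add (setIntegral_inter_rpow_le hp0 hp2 hδ hΩ hgm hg0 hgp)
    (setIntegral_sdiff_rpow_le hp0 hp2 hδ hΩ hgm hg0 hgp hΩfin)

end Integral

lemma Real.rpow_add_le_mul_rpow_add_rpow {a b r : ℝ} (ha : 0 ≤ a) (hb : 0 ≤ b) (hr : 1 ≤ r) :
    (a + b) ^ r ≤ 2 ^ (r - 1) * (a ^ r + b ^ r) := by
  lift a to NNReal using ha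
  lift b to NNReal using hb
  exact_mod_cast NNReal.rpow_add_le_mul_rpow_add_rpow a b hr

lemma two_rpow_le_eight {s : ℝ} (hs : s ≤ 3) : (2:ℝ) ^ s ≤ 8 :=
  calc (2:ℝ) ^ s ≤ 2 ^ (3:ℝ) := Real.rpow_le_rpow_of_exponent_le one_le_two hs
    _ = 8 := by norm_num

lemma rpow_two_div_le_of_le_add {p δ m A I : ℝ} (hp1 : 1 ≤ p) (hp2 : p < 2) (hδ : 0 ≤ δ)
    (hm : 0 ≤ m) (hA : 0 ≤ A) (hI : 0 ≤ I)
    (h : I ≤ 2 ^ (2 - p) * A + ((2 * δ) ^ (2 - p) * A) ^ (p / 2) * m ^ ((2 - p) / 2)) :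
    I ^ (2 / p) ≤ 8 * (δ * m ^ (1 / p)) ^ (2 - p) * A + 8 * A ^ (2 / p) := by
  have hp0 : 0 < p := by linarith
  have hr₁ : 1 ≤ 2 / p := (one_le_div hp0).mpr hp2.le
  have hr₂ : 2 / p ≤ 2 := div_le_self zero_le_two hp1
  have hK : (δ * m ^ (1 / p)) ^ (2 - p) = δ ^ (2 - p) * m ^ ((2 - p) / p) := by
    rw [Real.mul_rpow hδ (by positivity), ← Real.rpow_mul hm, one_div_mul_eq_div]
  have hX : (2 ^ (2 - p) * A) ^ (2 / p) = 2 ^ ((2 - p) * (2 / p)) * A ^ (2 / p) := by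
    rw [Real.mul_rpow (by positivity) hA, ← Real.rpow_mul zero_le_two]
  have hY : (((2 * δ) ^ (2 - p) * A) ^ (p / 2) * m ^ ((2 - p) / 2)) ^ (2 / p)
      = 2 ^ (2 - p) * ((δ * m ^ (1 / p)) ^ (2 - p) * A) := by
    rw [Real.mul_rpow (by positivity) (by positivity), ← Real.rpow_mul (by positivity),
      ← Real.rpow_mul hm, div_mul_div_cancel₀ two_ne_zero, div_self hp0.ne', Real.rpow_one,
      show (2 - p) / 2 * (2 / p) = (2 - p) / p by field_simp, Real.mul_rpow zero_le_two hδ, hK]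
    ring
  have hc₁ : (2:ℝ) ^ (2 / p - 1) * 2 ^ ((2 - p) * (2 / p)) ≤ 8 := by
    rw [← Real.rpow_add two_pos]
    refine two_rpow_le_eight ?_
    nlinarith
  have hc₂ : (2:ℝ) ^ (2 / p - 1) * 2 ^ (2 - p) ≤ 8 := by
    rw [← Real.rpow_add two_pos]
    exact two_rpow_le_eight (by linarith)
  calc I ^ (2 / p)
      ≤ (2 ^ (2 - p) * A + ((2 * δ) ^ (2 - p) * A) ^ (p / 2) * m ^ ((2 - p) / 2)) ^ (2 / p) :=
        Real.rpow_le_rpow hI h (by positivity)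
    _ ≤ 2 ^ (2 / p - 1) * ((2 ^ (2 - p) * A) ^ (2 / p)
          + (((2 * δ) ^ (2 - p) * A) ^ (p / 2) * m ^ ((2 - p) / 2)) ^ (2 / p)) :=
        Real.rpow_add_le_mul_rpow_add_rpow (by positivity) (by positivity) hr₁
    _ = 2 ^ (2 / p - 1) * 2 ^ ((2 - p) * (2 / p)) * A ^ (2 / p)
          + 2 ^ (2 / p - 1) * 2 ^ (2 - p) * ((δ * m ^ (1 / p)) ^ (2 - p) * A) := by
        rw [hX, hY]
        ring
    _ ≤ 8 * A ^ (2 / p) + 8 * ((δ * m ^ (1 / p)) ^ (2 - p) * A) := by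
        gcongr
    _ = 8 * (δ * m ^ (1 / p)) ^ (2 - p) * A + 8 * A ^ (2 / p) := by ring

theorem stmt15_general (p δ : ℝ) (hp1 : 1 < p) (hp2 : p < 2) (hδ0 : 0 ≤ δ) :
    ∃ c : ℝ, 0 < c ∧
      ∀ (d : ℕ) (Ω : Set (Fin d → ℝ)),
        MeasurableSet Ω → Bornology.IsBounded Ω → 0 < volume Ω →
        ∀ G : (Fin d → ℝ) → Matrix (Fin d) (Fin d) ℝ,
          (∀ i j, Measurable fun x => G x i j) →
          (∀ x ∈ Ω, (G x)ᵀ = G x) →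
          IntegrableOn (fun x => mnorm (G x) ^ p) Ω volume →
          ((∫ x in Ω, mnorm (G x) ^ p) ^ ((1:ℝ)/p)) ^ (2:ℝ)
            ≤ c * (δ * (volume Ω).toReal ^ ((1:ℝ)/p)) ^ (2 - p)
                * ((∫ x in Ω, mnorm (Fmap p δ (G x)) ^ (2:ℝ)) ^ ((1:ℝ)/2)) ^ (2:ℝ)
              + c * ((∫ x in Ω, mnorm (Fmap p δ (G x)) ^ (2:ℝ)) ^ ((1:ℝ)/2))
                  ^ ((4:ℝ)/p) := by
  refine ⟨8, by norm_num, fun d Ω hΩ hΩb _ G hGm hGsym hGp => ?_⟩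
  have hF : ∫ x in Ω, mnorm (Fmap p δ (G x)) ^ (2:ℝ) = ∫ x in Ω, fnormSq p δ (mnorm (G x)) :=
    setIntegral_congr_fun hΩ fun x hx => by
      rw [mnorm_Fmap_rpow_two hδ0, msym_of_transpose_eq (hGsym x hx)]
  have hA : 0 ≤ ∫ x in Ω, fnormSq p δ (mnorm (G x)) :=
    setIntegral_nonneg hΩ fun x _ => fnormSq_nonneg hδ0 (mnorm_nonneg _)
  have hI : 0 ≤ ∫ x in Ω, mnorm (G x) ^ p :=
    setIntegral_nonneg hΩ fun x _ => Real.rpow_nonneg (mnorm_nonneg _) _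
  have hbound := rpow_two_div_le_of_le_add hp1.le hp2 hδ0 ENNReal.toReal_nonneg hA hI
    (setIntegral_rpow_le (by linarith) hp2 hδ0 hΩ (measurable_mnorm hGm)
      (fun _ => mnorm_nonneg _) hGp hΩb.measure_lt_top)
  rw [hF, ← Real.rpow_mul hI, ← Real.rpow_mul hA, ← Real.rpow_mul hA,
    show 1 / p * 2 = 2 / p by ring, show (1:ℝ) / 2 * 2 = 1 by norm_num, Real.rpow_one,
    show 1 / 2 * (4 / p) = 2 / p by ring]
  exact hbound

/-- Let `p ∈ (1,2)` and `δ ∈ [0,1]`. There is a constant `c > 0` depending only on `p`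
such that for every bounded measurable `Ω ⊂ ℝᵈ` of positive measure and every measurable
symmetric-matrix-valued `G ∈ Lᵖ(Ω)`:
`‖G‖ₚ² ≤ c * K^(2-p) * ‖F∘G‖₂² + c * ‖F∘G‖₂^(4/p)`, where `K = δ * |Ω|^(1/p)`. -/
theorem stmt15 (p δ : ℝ) (hp1 : 1 < p) (hp2 : p < 2) (hδ0 : 0 ≤ δ) (hδ1 : δ ≤ 1) :
    ∃ c : ℝ, 0 < c ∧
      ∀ (d : ℕ) (Ω : Set (Fin d → ℝ)),
        MeasurableSet Ω → Bornology.IsBounded Ω → 0 < volume Ω →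
        ∀ G : (Fin d → ℝ) → Matrix (Fin d) (Fin d) ℝ,
          (∀ i j, Measurable fun x => G x i j) →
          (∀ x ∈ Ω, (G x)ᵀ = G x) →
          IntegrableOn (fun x => mnorm (G x) ^ p) Ω volume →
          ((∫ x in Ω, mnorm (G x) ^ p) ^ ((1:ℝ)/p)) ^ (2:ℝ)
            ≤ c * (δ * (volume Ω).toReal ^ ((1:ℝ)/p)) ^ (2 - p)
                * ((∫ x in Ω, mnorm (Fmap p δ (G x)) ^ (2:ℝ)) ^ ((1:ℝ)/2)) ^ (2:ℝ)
              + c * ((∫ x in Ω, mnorm (Fmap p δ (G x)) ^ (2:ℝ)) ^ ((1:ℝ)/2))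
                  ^ ((4:ℝ)/p) :=
  stmt15_general p δ hp1 hp2 hδ0
end
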